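/- Let A be a complex unital Banach algebra, let e, f, h ∈ A be invertible positive elements, let a ∈ A be such that a^†_{e,h} exists, and suppose a = b c where b x = 0 implies x = 0 and c A = A (so that b^†_{e,f} and c^†_{f,h} exist). Then the following are equivalent: (i) a is weighted EP with weights e and h; (ii) {b u : u ∈ A invertible} = {c^†_{f,h} u : u ∈ A invertible} and {u c : u ∈ A invertible} = {u b^†_{e,f} : u ∈ A invertible}; (iii) {x ∈ A : x b = 0} = {x ∈ A : x c^†_{f,h} = 0} and A c = A b^†_{e,f}. -/

import Mathlib

/-!
Common definitions: hermitian and positive elements of a complex unital Banach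
algebra, hermitian elements with respect to the equivalent norm induced by an
invertible positive element (weight), and the weighted Moore–Penrose inverse,
both for Banach algebra elements and for bounded linear operators between
Banach spaces.
-/

noncomputable section

/-- An element `a` of a complex unital Banach algebra is hermitian if
`‖exp(i t a)‖ = 1` for all real `t`. -/
def IsHermitianEl {A : Type*} [NormedRing A] [NormedAlgebra ℂ A] (a : A) : Prop :=
  ∀ t : ℝ, ‖NormedSpace.exp ((Complex.I * (t : ℂ)) • a)‖ = 1

/-- An element of a complex unital Banach algebra is positive if it is hermitian
and its spectrum is contained in `[0, ∞)`. -/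
def IsPositiveEl {A : Type*} [NormedRing A] [NormedAlgebra ℂ A] (a : A) : Prop :=
  IsHermitianEl a ∧ spectrum ℂ a ⊆ Complex.ofReal '' Set.Ici (0 : ℝ)

/-- `a` is hermitian in `A^u`, i.e. hermitian for the equivalent norm
`‖x‖_u = ‖u^{1/2} x u^{-1/2}‖`, where `u^{1/2}` is the (unique) invertible
positive square root of the invertible positive weight `u`. -/
def IsHermitianWt {A : Type*} [NormedRing A] [NormedAlgebra ℂ A] (u a : A) : Prop :=
  ∃ s : Aˣ, IsPositiveEl (s : A) ∧ ((s : A)) ^ 2 = u ∧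
    ∀ t : ℝ, ‖(s : A) * NormedSpace.exp ((Complex.I * (t : ℂ)) • a) * ((s⁻¹ : Aˣ) : A)‖ = 1

/-- `b` is the weighted Moore–Penrose inverse of `a` with weights `e` and `f`. -/
def IsWMPI {A : Type*} [NormedRing A] [NormedAlgebra ℂ A] (e f a b : A) : Prop :=
  a * b * a = a ∧ b * a * b = b ∧ IsHermitianWt e (a * b) ∧ IsHermitianWt f (b * a)

/-- `a` is weighted EP with weights `e` and `f`. -/
def IsWEP {A : Type*} [NormedRing A] [NormedAlgebra ℂ A] (e f a : A) : Prop :=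
  ∃ b : A, IsWMPI e f a b ∧ a * b = b * a

/-- `S ∈ L(Y,X)` is the weighted Moore–Penrose inverse of `T ∈ L(X,Y)` with
weights `E ∈ L(Y)` and `F ∈ L(X)`. -/
def IsWMPIop {X Y : Type*} [NormedAddCommGroup X] [NormedSpace ℂ X]
    [NormedAddCommGroup Y] [NormedSpace ℂ Y]
    (E : Y →L[ℂ] Y) (F : X →L[ℂ] X) (T : X →L[ℂ] Y) (S : Y →L[ℂ] X) : Prop :=
  (T.comp S).comp T = T ∧ (S.comp T).comp S = S ∧
    IsHermitianWt E (T.comp S) ∧ IsHermitianWt F (S.comp T)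

/-- `T ∈ L(X)` is weighted EP with weights `E` and `F`. -/
def IsWEPop {X : Type*} [NormedAddCommGroup X] [NormedSpace ℂ X]
    (E F T : X →L[ℂ] X) : Prop :=
  ∃ S : X →L[ℂ] X, IsWMPIop E F T S ∧ T.comp S = S.comp T



/-!
The weight of `IsHermitianWt` enters only through its positive square root `s`, which is unique
by Rosenblum's theorem (`s` and `-t` have disjoint spectra). For an idempotent `p`,
`exp (i π p) = 1 - 2 p`, so hermitian idempotents give reflections of weighted norm one. If two
such idempotents `p`, `q` generate the same one-sided ideal, the product of their reflections is
`1 + 2 (q - p)` with `(q - p)² = 0`; its powers `1 + 2 m (q - p)` stay bounded, forcing `p = q`.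
This makes weighted Moore–Penrose inverses unique.

Since `bd b = 1` and `c cd = 1`, `cd bd` is a weighted Moore–Penrose inverse of `a = b c` with
`a (cd bd) = b bd` and `(cd bd) a = cd c`, so `a` is weighted EP iff `b bd = cd c`. That condition
is purely ring-theoretic, and it holds iff `b = cd (c b)` and `c = (c b) bd` with `c b` a unit,
which gives (ii) and (iii).
-/

open Filter Bornology

section Rosenblum

variable {A : Type*} [NormedRing A] [NormedAlgebra ℂ A]

theorem resolvent_mul_eq_mul_resolvent {a b x : A} (hx : a * x = x * b) {z : ℂ}
    (hza : z ∈ resolventSet ℂ a) (hzb : z ∈ resolventSet ℂ b) :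
    resolvent a z * x = x * resolvent b z := by
  have hrel : (algebraMap ℂ A z - a) * x = x * (algebraMap ℂ A z - b) := by
    rw [sub_mul, mul_sub, hx, Algebra.commutes]
  have hb : (algebraMap ℂ A z - b) * resolvent b z = 1 := Ring.mul_inverse_cancel _ hzb
  have ha : resolvent a z * (algebraMap ℂ A z - a) = 1 := Ring.inverse_mul_cancel _ hza
  calc resolvent a z * x
      = resolvent a z * x * ((algebraMap ℂ A z - b) * resolvent b z) := by rw [hb, mul_one]
    _ = resolvent a z * (algebraMap ℂ A z - a) * x * resolvent b z := by
        simp only [mul_assoc, hrel]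
    _ = x * resolvent b z := by rw [ha, one_mul]

theorem eq_zero_of_mul_eq_mul_of_disjoint_spectrum [CompleteSpace A] {a b x : A}
    (hd : Disjoint (spectrum ℂ a) (spectrum ℂ b)) (hx : a * x = x * b) : x = 0 := by
  classical
  -- `z ↦ (z - a)⁻¹ x` and `z ↦ x (z - b)⁻¹` glue to an entire function vanishing at infinity.
  set H : ℂ → A := fun z => if z ∈ spectrum ℂ a then x * resolvent b z else resolvent a z * x
  have hHa : ∀ z ∈ resolventSet ℂ a, H z = resolvent a z * x := fun z hz => if_neg (not_not.2 hz)
  have hHb : ∀ z ∈ resolventSet ℂ b, H z = x * resolvent b z := by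
    intro z hz
    by_cases hza : z ∈ spectrum ℂ a
    · exact if_pos hza
    · exact (if_neg hza).trans (resolvent_mul_eq_mul_resolvent hx (not_not.1 hza) hz)
  have hH : Differentiable ℂ H := by
    intro z
    by_cases hza : z ∈ resolventSet ℂ a
    · refine ((spectrum.hasDerivAt_resolvent_const_left hza).differentiableAt.mul_const x
        ).congr_of_eventuallyEq ?_
      filter_upwards [(spectrum.isOpen_resolventSet a).mem_nhds hza] with w hw using hHa w hw
    · have hzb : z ∈ resolventSet ℂ b := by
        by_contra hzb
        exact hd.ne_of_mem hza hzb rfl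
      refine ((spectrum.hasDerivAt_resolvent_const_left hzb).differentiableAt.const_mul x
        ).congr_of_eventuallyEq ?_
      filter_upwards [(spectrum.isOpen_resolventSet b).mem_nhds hzb] with w hw using hHb w hw
  have hfar : resolventSet ℂ a ∈ cobounded ℂ := by
    simpa only [spectrum, compl_compl] using
      isCobounded_def.mp (spectrum.isBounded (𝕜 := ℂ) a).compl
  have hH0 : Tendsto H (cobounded ℂ) (nhds 0) := by
    refine (by simpa using (spectrum.resolvent_tendsto_cobounded a).mul_const x :
      Tendsto (fun z => resolvent a z * x) _ _).congr' ?_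
    filter_upwards [hfar] with z hz using (hHa z hz).symm
  rw [Metric.cobounded_eq_cocompact] at hH0
  obtain ⟨z, hz⟩ := nonempty_of_mem hfar
  have := hH.apply_eq_of_tendsto_cocompact z hH0
  rwa [hHa z hz, (spectrum.isUnit_resolvent.mp hz).mul_right_eq_zero] at this

end Rosenblum

section Positive

variable {A : Type*} [NormedRing A] [NormedAlgebra ℂ A]

theorem IsPositiveEl.re_pos_of_mem_spectrum {s : A} (hs : IsPositiveEl s) (hu : IsUnit s)
    {z : ℂ} (hz : z ∈ spectrum ℂ s) : 0 < z.re := by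
  obtain ⟨r, hr, rfl⟩ := hs.2 hz
  have hr0 : r ≠ 0 := by
    rintro rfl
    exact spectrum.zero_notMem ℂ hu (by simpa using hz)
  simpa using lt_of_le_of_ne hr (Ne.symm hr0)

theorem IsPositiveEl.eq_of_sq_eq [CompleteSpace A] {s t : A} (hs : IsPositiveEl s)
    (hsu : IsUnit s) (ht : IsPositiveEl t) (htu : IsUnit t) (h : s ^ 2 = t ^ 2) : s = t := by
  have hd : Disjoint (spectrum ℂ s) (spectrum ℂ (-t)) := by
    refine Set.disjoint_left.mpr fun z hzs hzt => ?_
    rw [← spectrum.neg_eq, Set.mem_neg] at hzt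
    have := hs.re_pos_of_mem_spectrum hsu hzs
    have := ht.re_pos_of_mem_spectrum htu hzt
    simp only [Complex.neg_re] at this
    linarith
  have hsyl : s * (s - t) = (s - t) * -t := by
    rw [sq, sq] at h
    rw [mul_sub, sub_mul, h]
    noncomm_ring
  exact sub_eq_zero.mp (eq_zero_of_mul_eq_mul_of_disjoint_spectrum hd hsyl)

end Positive

theorem NormedSpace.exp_smul_of_isIdempotentElem {A : Type*} [NormedRing A] [NormedAlgebra ℂ A]
    [CompleteSpace A] {p : A} (hp : IsIdempotentElem p) (c : ℂ) :
    NormedSpace.exp (c • p) = 1 + (Complex.exp c - 1) • p := by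
  have hterm : ∀ n : ℕ, ((n.factorial : ℂ)⁻¹ • (c • p) ^ n) =
      ((n.factorial : ℂ)⁻¹ • c ^ n) • p + if n = 0 then 1 - p else 0 := by
    rintro (_ | n)
    · simp
    · rw [smul_pow, hp.pow_succ_eq, smul_smul, if_neg n.succ_ne_zero, add_zero, smul_eq_mul]
  have hexp : HasSum (fun n : ℕ => (n.factorial : ℂ)⁻¹ • c ^ n) (Complex.exp c) := by
    rw [Complex.exp_eq_exp_ℂ]
    exact NormedSpace.exp_series_hasSum_exp' c
  refine (NormedSpace.exp_series_hasSum_exp' (𝕂 := ℂ) (c • p)).unique ?_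
  simp only [hterm]
  convert (hexp.smul_const p).add (hasSum_ite_eq 0 (1 - p)) using 1
  rw [sub_smul, one_smul]
  abel

theorem eq_zero_of_mul_self_eq_zero_of_norm_one_add_le_one {A : Type*} [NormedRing A]
    [NormedSpace ℝ A] {ζ : A} (hζ : ζ * ζ = 0) (h : ‖1 + ζ‖ ≤ 1) : ζ = 0 := by
  have hpow : ∀ m : ℕ, (1 + ζ) ^ m = 1 + m • ζ := by
    intro m
    induction m with
    | zero => simp
    | succ m ih => rw [pow_succ, ih, add_mul, one_mul, mul_add, mul_one, smul_mul_assoc, hζ,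
        smul_zero, add_zero, succ_nsmul', add_assoc]
  have hbound : ∀ m : ℕ, (m + 1) * ‖ζ‖ ≤ 1 + ‖(1 : A)‖ := fun m =>
    calc (m + 1) * ‖ζ‖ = ‖(1 + ζ) ^ (m + 1) - 1‖ := by
          rw [hpow, add_sub_cancel_left, RCLike.norm_nsmul ℝ, nsmul_eq_mul, Nat.cast_succ]
      _ ≤ ‖(1 + ζ) ^ (m + 1)‖ + ‖(1 : A)‖ := norm_sub_le _ _
      _ ≤ 1 + ‖(1 : A)‖ := by
          gcongr
          exact (norm_pow_le' _ m.succ_pos).trans (pow_le_one₀ (norm_nonneg _) h)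
  by_contra hne
  have hpos : 0 < ‖ζ‖ := norm_pos_iff.mpr hne
  obtain ⟨m, hm⟩ := exists_nat_gt ((1 + ‖(1 : A)‖) / ‖ζ‖)
  rw [div_lt_iff₀ hpos] at hm
  nlinarith [hbound m]

section HermitianIdempotent

variable {A : Type*} [NormedRing A] [NormedAlgebra ℂ A] [CompleteSpace A]

theorem IsHermitianWt.norm_conj_one_sub_two_mul {u p : A} (H : IsHermitianWt u p)
    (hp : IsIdempotentElem p) {s : Aˣ} (hs : IsPositiveEl (s : A)) (hsu : (s : A) ^ 2 = u) :
    ‖ConjAct.toConjAct s • (1 - 2 * p)‖ = 1 := by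
  obtain ⟨t, ht, htu, hnorm⟩ := H
  obtain rfl : t = s := Units.ext <|
    ht.eq_of_sq_eq t.isUnit hs s.isUnit (htu.trans hsu.symm)
  have hexp : NormedSpace.exp ((Complex.I * (Real.pi : ℂ)) • p) = 1 - 2 * p := by
    rw [NormedSpace.exp_smul_of_isIdempotentElem hp, mul_comm, Complex.exp_pi_mul_I,
      show (-1 - 1 : ℂ) = -2 by norm_num, neg_smul, two_smul, two_mul, sub_eq_add_neg]
  rw [ConjAct.units_smul_def, ← hexp]
  exact hnorm Real.pi

theorem IsHermitianWt.eq_zero_of_mul_eq_one_add {u p q ζ : A} (Hp : IsHermitianWt u p)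
    (Hq : IsHermitianWt u q) (hp : IsIdempotentElem p) (hq : IsIdempotentElem q)
    (hζ : ζ * ζ = 0) (h : (1 - 2 * p) * (1 - 2 * q) = 1 + ζ) : ζ = 0 := by
  have ⟨s, hs, hsu, _⟩ := Hp
  set g := ConjAct.toConjAct s
  refine (smul_eq_zero_iff_eq g).mp (eq_zero_of_mul_self_eq_zero_of_norm_one_add_le_one ?_ ?_)
  · rw [← smul_mul', hζ, smul_zero]
  · calc ‖1 + g • ζ‖ = ‖g • (1 - 2 * p) * g • (1 - 2 * q)‖ := by
          rw [← smul_mul', h, smul_add, smul_one]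
      _ ≤ ‖g • (1 - 2 * p)‖ * ‖g • (1 - 2 * q)‖ := norm_mul_le _ _
      _ = 1 := by
          rw [Hp.norm_conj_one_sub_two_mul hp hs hsu, Hq.norm_conj_one_sub_two_mul hq hs hsu,
            one_mul]

theorem IsHermitianWt.eq_of_sub_mul_self_eq_zero {u p q : A} (Hp : IsHermitianWt u p)
    (Hq : IsHermitianWt u q) (hp : IsIdempotentElem p) (hq : IsIdempotentElem q)
    (hsq : (q - p) * (q - p) = 0)
    (hprod : (1 - 2 * p) * (1 - 2 * q) = 1 + 2 * (q - p) ∨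
      (1 - 2 * q) * (1 - 2 * p) = 1 + 2 * (q - p)) : p = q := by
  have hζ : (2 * (q - p)) * (2 * (q - p)) = 0 := by
    rw [show (2 * (q - p)) * (2 * (q - p)) = 4 * ((q - p) * (q - p)) by noncomm_ring, hsq,
      mul_zero]
  have h2 : (2 : ℂ) • (q - p) = 0 := by
    rw [two_smul, ← two_mul]
    exact hprod.elim (Hp.eq_zero_of_mul_eq_one_add Hq hp hq hζ)
      (Hq.eq_zero_of_mul_eq_one_add Hp hq hp hζ)
  exact (sub_eq_zero.mp ((smul_eq_zero.mp h2).resolve_left two_ne_zero)).symm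

theorem IsHermitianWt.eq_of_mul_eq_right {u p q : A} (Hp : IsHermitianWt u p)
    (Hq : IsHermitianWt u q) (hp : IsIdempotentElem p) (hq : IsIdempotentElem q)
    (hpq : p * q = q) (hqp : q * p = p) : p = q := by
  refine Hp.eq_of_sub_mul_self_eq_zero Hq hp hq ?_ (.inl ?_)
  · rw [show (q - p) * (q - p) = q * q - q * p - p * q + p * p by noncomm_ring, hp.eq, hq.eq,
      hpq, hqp]
    abel
  · rw [show (1 - 2 * p) * (1 - 2 * q) = 1 - 2 * p - 2 * q + 4 * (p * q) by noncomm_ring, hpq]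
    noncomm_ring

theorem IsHermitianWt.eq_of_mul_eq_left {u p q : A} (Hp : IsHermitianWt u p)
    (Hq : IsHermitianWt u q) (hp : IsIdempotentElem p) (hq : IsIdempotentElem q)
    (hpq : p * q = p) (hqp : q * p = q) : p = q := by
  refine Hp.eq_of_sub_mul_self_eq_zero Hq hp hq ?_ (.inr ?_)
  · rw [show (q - p) * (q - p) = q * q - q * p - p * q + p * p by noncomm_ring, hp.eq, hq.eq,
      hpq, hqp]
    abel
  · rw [show (1 - 2 * q) * (1 - 2 * p) = 1 - 2 * q - 2 * p + 4 * (q * p) by noncomm_ring, hqp]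
    noncomm_ring

end HermitianIdempotent

section WeightedMoorePenrose

variable {A : Type*} [NormedRing A] [NormedAlgebra ℂ A]

theorem IsWMPI.isIdempotentElem_mul {e f a b : A} (hb : IsWMPI e f a b) :
    IsIdempotentElem (a * b) := by
  rw [IsIdempotentElem, ← mul_assoc, hb.1]

theorem IsWMPI.isIdempotentElem_mul' {e f a b : A} (hb : IsWMPI e f a b) :
    IsIdempotentElem (b * a) := by
  rw [IsIdempotentElem, ← mul_assoc, hb.2.1]

theorem IsWMPI.unique [CompleteSpace A] {e f a b b' : A} (hb : IsWMPI e f a b)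
    (hb' : IsWMPI e f a b') : b = b' := by
  have hab : a * b = a * b' :=
    hb.2.2.1.eq_of_mul_eq_right hb'.2.2.1 hb.isIdempotentElem_mul hb'.isIdempotentElem_mul
      (by rw [← mul_assoc, hb.1]) (by rw [← mul_assoc, hb'.1])
  have hba : b * a = b' * a :=
    hb.2.2.2.eq_of_mul_eq_left hb'.2.2.2 hb.isIdempotentElem_mul' hb'.isIdempotentElem_mul'
      (by rw [mul_assoc, ← mul_assoc a, hb'.1]) (by rw [mul_assoc, ← mul_assoc a, hb.1])
  calc b = b * (a * b) := by rw [← mul_assoc, hb.2.1]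
    _ = b * a * b' := by rw [hab, mul_assoc]
    _ = b' := by rw [hba, hb'.2.1]

theorem IsWMPI.isWEP_iff [CompleteSpace A] {e f a b : A} (hb : IsWMPI e f a b) :
    IsWEP e f a ↔ a * b = b * a :=
  ⟨fun ⟨_, hb', hcomm⟩ => hb'.unique hb ▸ hcomm, fun hcomm => ⟨b, hb, hcomm⟩⟩

theorem IsWMPI.mul {e f h b bd c cd : A} (hb : IsWMPI e f b bd) (hc : IsWMPI f h c cd)
    (hbdb : bd * b = 1) (hccd : c * cd = 1) : IsWMPI e h (b * c) (cd * bd) := by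
  have hleft : b * c * (cd * bd) = b * bd := by
    rw [mul_assoc, ← mul_assoc c, hccd, one_mul]
  have hright : cd * bd * (b * c) = cd * c := by
    rw [mul_assoc, ← mul_assoc bd, hbdb, one_mul]
  refine ⟨?_, ?_, hleft ▸ hb.2.2.1, hright ▸ hc.2.2.2⟩
  · rw [hleft, ← mul_assoc, hb.1]
  · rw [hright, ← mul_assoc, hc.2.1]

theorem isWEP_mul_iff [CompleteSpace A] {e f h b bd c cd : A} (hb : IsWMPI e f b bd)
    (hc : IsWMPI f h c cd) (hbdb : bd * b = 1) (hccd : c * cd = 1) :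
    IsWEP e h (b * c) ↔ b * bd = cd * c := by
  rw [(hb.mul hc hbdb hccd).isWEP_iff, mul_assoc, ← mul_assoc c, hccd, one_mul, mul_assoc cd,
    ← mul_assoc bd, hbdb, one_mul]

end WeightedMoorePenrose

section InnerInverse

variable {M : Type*} [Monoid M]

theorem IsLeftRegular.mul_eq_one_of_mul_mul_eq_self {b bd : M} (hb : IsLeftRegular b)
    (h : b * bd * b = b) : bd * b = 1 :=
  hb (show b * (bd * b) = b * 1 by rw [← mul_assoc, h, mul_one])

theorem mul_eq_one_of_mul_mul_eq_self_of_mul_eq_one {c cd x : M} (h : c * cd * c = c)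
    (hx : c * x = 1) : c * cd = 1 := by
  rw [← mul_one (c * cd), ← hx, ← mul_assoc, h, hx]

theorem setOf_mul_units_eq_iff {x y : M} :
    {z | ∃ u : Mˣ, z = x * u} = {z | ∃ u : Mˣ, z = y * u} ↔ ∃ u : Mˣ, x = y * u := by
  refine ⟨fun h => h.subset ⟨1, (mul_one x).symm⟩, ?_⟩
  rintro ⟨u, rfl⟩
  ext z
  refine ⟨fun ⟨v, hv⟩ => ⟨u * v, by rw [hv, Units.val_mul, mul_assoc]⟩,
    fun ⟨v, hv⟩ => ⟨u⁻¹ * v, ?_⟩⟩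
  rw [hv, Units.val_mul, mul_assoc, ← mul_assoc (u : M), Units.mul_inv, one_mul]

theorem setOf_units_mul_eq_iff {x y : M} :
    {z | ∃ u : Mˣ, z = u * x} = {z | ∃ u : Mˣ, z = u * y} ↔ ∃ u : Mˣ, x = u * y := by
  refine ⟨fun h => h.subset ⟨1, (one_mul x).symm⟩, ?_⟩
  rintro ⟨u, rfl⟩
  ext z
  refine ⟨fun ⟨v, hv⟩ => ⟨v * u, by rw [hv, Units.val_mul, mul_assoc]⟩,
    fun ⟨v, hv⟩ => ⟨v * u⁻¹, ?_⟩⟩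
  rw [hv, Units.val_mul, mul_assoc, Units.inv_mul_cancel_left]

theorem mul_eq_mul_iff_exists_units {b bd c cd : M} (hbdb : bd * b = 1) (hccd : c * cd = 1) :
    b * bd = cd * c ↔ (∃ u : Mˣ, b = cd * u) ∧ ∃ u : Mˣ, c = u * bd := by
  constructor
  · intro h
    let u : Mˣ :=
      { val := c * b
        inv := bd * cd
        val_inv := by rw [mul_assoc, ← mul_assoc b, h, mul_assoc, hccd, mul_one, hccd]
        inv_val := by rw [mul_assoc, ← mul_assoc cd, ← h, mul_assoc, hbdb, mul_one, hbdb] }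
    refine ⟨⟨u, ?_⟩, ⟨u, ?_⟩⟩
    · rw [← mul_assoc, ← h, mul_assoc, hbdb, mul_one]
    · show c = c * b * bd
      rw [mul_assoc, h, ← mul_assoc, hccd, one_mul]
  · rintro ⟨⟨u, rfl⟩, ⟨v, rfl⟩⟩
    have huv : (u : M) = v := by
      rw [← one_mul (u : M), ← hccd, mul_assoc, mul_assoc, hbdb, mul_one]
    rw [mul_assoc, huv]

end InnerInverse

theorem mul_eq_mul_iff_annihilator_eq_and_ideal_eq {R : Type*} [Ring R] {b bd c cd : R}
    (hbdb : bd * b = 1) (hccd : c * cd = 1) :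
    b * bd = cd * c ↔ {x | x * b = 0} = {x | x * cd = 0} ∧
      {x | ∃ y, x = y * c} = {x | ∃ y, x = y * bd} := by
  constructor
  · intro h
    obtain ⟨⟨u, rfl⟩, ⟨v, rfl⟩⟩ := (mul_eq_mul_iff_exists_units hbdb hccd).mp h
    refine ⟨?_, ?_⟩
    · ext x
      simp only [Set.mem_ofPred_eq, ← mul_assoc, Units.mul_left_eq_zero]
    · ext x
      refine ⟨fun ⟨y, hy⟩ => ⟨y * v, by rw [hy, mul_assoc]⟩, fun ⟨y, hy⟩ => ⟨y * v⁻¹, ?_⟩⟩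
      rw [hy, mul_assoc, Units.inv_mul_cancel_left]
  · rintro ⟨hann, hideal⟩
    have hcd : cd = b * bd * cd := by
      have : (1 - b * bd) * cd = 0 := hann.subset <| show (1 - b * bd) * b = 0 by
        rw [sub_mul, mul_assoc, hbdb, mul_one, one_mul, sub_self]
      rwa [sub_mul, one_mul, sub_eq_zero] at this
    obtain ⟨y, hy⟩ : ∃ y, bd = y * c := hideal.symm.subset ⟨1, (one_mul bd).symm⟩
    have hbd : bd = bd * (cd * c) := by
      rw [← mul_assoc, hy, mul_assoc y, hccd, mul_one]
    calc b * bd = b * bd * (cd * c) := by rw [mul_assoc, ← hbd]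
      _ = cd * c := by rw [← mul_assoc, ← hcd]

theorem factorization_bc_weighted_EP_iff_unit_cosets_general
    {A : Type*} [NormedRing A] [NormedAlgebra ℂ A] [CompleteSpace A]
    (e f h a b c : A)
    (habc : a = b * c)
    (hb : ∀ x : A, b * x = 0 → x = 0) (hc : ∀ y : A, ∃ x : A, c * x = y)
    (bd : A) (hbd : IsWMPI e f b bd) (cd : A) (hcd : IsWMPI f h c cd) :
    (IsWEP e h a ↔
      ({x : A | ∃ u : Aˣ, x = b * (u : A)} = {x : A | ∃ u : Aˣ, x = cd * (u : A)} ∧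
        {x : A | ∃ u : Aˣ, x = (u : A) * c} = {x : A | ∃ u : Aˣ, x = (u : A) * bd})) ∧
    (IsWEP e h a ↔
      ({x : A | x * b = 0} = {x : A | x * cd = 0} ∧
        {x : A | ∃ y : A, x = y * c} = {x : A | ∃ y : A, x = y * bd})) := by
  have hbdb : bd * b = 1 :=
    (isLeftRegular_iff_right_eq_zero_of_mul.mpr hb).mul_eq_one_of_mul_mul_eq_self hbd.1
  obtain ⟨x, hx⟩ := hc 1
  have hccd : c * cd = 1 := mul_eq_one_of_mul_mul_eq_self_of_mul_eq_one hcd.1 hx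
  have hEP : IsWEP e h a ↔ b * bd = cd * c := habc ▸ isWEP_mul_iff hbd hcd hbdb hccd
  rw [setOf_mul_units_eq_iff, setOf_units_mul_eq_iff, ← mul_eq_mul_iff_exists_units hbdb hccd,
    ← mul_eq_mul_iff_annihilator_eq_and_ideal_eq hbdb hccd]
  exact ⟨hEP, hEP⟩

/-- For `a = b c` as above, `a` is weighted EP with weights `e` and `h` iff
`b A⁻¹ = c^†_{f,h} A⁻¹` and `A⁻¹ c = A⁻¹ b^†_{e,f}`, iff
`{x : x b = 0} = {x : x c^†_{f,h} = 0}` and `A c = A b^†_{e,f}`. -/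
theorem factorization_bc_weighted_EP_iff_unit_cosets
    {A : Type*} [NormedRing A] [NormedAlgebra ℂ A] [CompleteSpace A]
    (e f h a b c : A)
    (he : IsPositiveEl e ∧ IsUnit e) (hf : IsPositiveEl f ∧ IsUnit f)
    (hh : IsPositiveEl h ∧ IsUnit h)
    (ad : A) (had : IsWMPI e h a ad)
    (habc : a = b * c)
    (hb : ∀ x : A, b * x = 0 → x = 0) (hc : ∀ y : A, ∃ x : A, c * x = y)
    (bd : A) (hbd : IsWMPI e f b bd) (cd : A) (hcd : IsWMPI f h c cd) :
    (IsWEP e h a ↔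
      ({x : A | ∃ u : Aˣ, x = b * (u : A)} = {x : A | ∃ u : Aˣ, x = cd * (u : A)} ∧
        {x : A | ∃ u : Aˣ, x = (u : A) * c} = {x : A | ∃ u : Aˣ, x = (u : A) * bd})) ∧
    (IsWEP e h a ↔
      ({x : A | x * b = 0} = {x : A | x * cd = 0} ∧
        {x : A | ∃ y : A, x = y * c} = {x : A | ∃ y : A, x = y * bd})) :=
  factorization_bc_weighted_EP_iff_unit_cosets_general e f h a b c habc hb hc bd hbd cd hcd
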